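/- arXiv:1110.6779 — 2 statements merged into one kernel-verified Lean document; each statement's English description precedes it below -/
import Mathlib

section
/- For all n ≥ 2 and k ≥ 1, the number R(n,k) of permutations of {1,...,n} with exactly k alternating runs satisfies the recurrence R(n,k) = k·R(n-1,k) + 2·R(n-1,k-1) + (n-k)·R(n-1,k-2), with initial values R(1,0)=1 and R(1,k)=0 for k ≥ 1. -/
open Polynomial Finset

/-- Derivative polynomials for tangent: `P 0 = X`, `P (n+1) = (1+X^2) * (P n)'`. -/
noncomputable def P : ℕ → Polynomial ℝ
  | 0 => Polynomial.X
  | n + 1 => (1 + Polynomial.X ^ 2) * (P n).derivative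

/-- The values of a permutation of `Fin n`, as a function `ℕ → ℕ` (junk value `0` off-range). -/
def permVal {n : ℕ} (π : Equiv.Perm (Fin n)) : ℕ → ℕ :=
  fun j => if h : j < n then (π ⟨j, h⟩ : ℕ) else 0

/-- The number of alternating runs of a permutation of `{1,…,n}` (0-indexed positions):
one more than the number of interior positions where the permutation changes direction.
By convention this is `0` when `n ≤ 1`. -/
def runs (n : ℕ) (π : Equiv.Perm (Fin n)) : ℕ :=
  if n ≤ 1 then 0 else
    1 + ((Finset.Ico 1 (n - 1)).filter (fun i =>
      (permVal π (i - 1) < permVal π i ∧ permVal π (i + 1) < permVal π i) ∨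
      (permVal π i < permVal π (i - 1) ∧ permVal π i < permVal π (i + 1)))).card

/-- `R n k`: the number of permutations of `{1,…,n}` with exactly `k` alternating runs. -/
def R (n k : ℕ) : ℕ :=
  (Finset.univ.filter (fun π : Equiv.Perm (Fin n) => runs n π = k)).card

/-- The generating polynomial `R_n(x) = ∑_k R(n,k) x^k`. -/
noncomputable def Rpoly (n : ℕ) : Polynomial ℝ :=
  ∑ k ∈ Finset.range n, Polynomial.C ((R n k : ℝ)) * Polynomial.X ^ k

/-- Stirling numbers of the second kind. -/
def stirling2 : ℕ → ℕ → ℕ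
  | 0, 0 => 1
  | 0, _ + 1 => 0
  | _ + 1, 0 => 0
  | n + 1, k + 1 => (k + 1) * stirling2 n (k + 1) + stirling2 n k

/-- The number of descents of a permutation of `Fin n`. -/
def des (n : ℕ) (π : Equiv.Perm (Fin n)) : ℕ :=
  ((Finset.range (n - 1)).filter (fun i => permVal π (i + 1) < permVal π i)).card

/-- `R` indexed by an integer number of runs (zero for negative indices). -/
def Rk (n : ℕ) (k : ℤ) : ℤ :=
  if 0 ≤ k then (R n k.toNat : ℤ) else 0

/-!
Removing the largest entry from a permutation of `{1,…,m+1}` leaves a permutation `σ` of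
`{1,…,m}`, and every permutation of `{1,…,m+1}` arises from exactly one `σ` by inserting `m+1`
into one of the `m+1` gaps of `σ`. If `σ` has `r` alternating runs, then `r` of these gaps keep
the number of runs, two gaps raise it by one and the other `m-1-r` gaps raise it by two; summing
over `σ` gives the recurrence. The count is read off the ascent/descent word of `σ`: the number
of runs is one more than the number of letter changes, and inserting the maximum into a gap
replaces one letter by an ascent followed by a descent.
-/

def changes (s : ℕ → Bool) (N : ℕ) : ℕ :=
  #{i ∈ range N | s i ≠ s (i + 1)}

lemma changes_zero (s : ℕ → Bool) : changes s 0 = 0 := rfl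

lemma changes_succ (s : ℕ → Bool) (N : ℕ) :
    changes s (N + 1) = changes s N + if s N ≠ s (N + 1) then 1 else 0 := by
  simp only [changes, card_filter, sum_range_succ]

lemma changes_congr {s t : ℕ → Bool} {N : ℕ} (h : ∀ i ≤ N, s i = t i) :
    changes s N = changes t N := by
  refine congrArg card (filter_congr fun i hi => ?_)
  rw [mem_range] at hi
  rw [h i hi.le, h (i + 1) hi]

/-- The ascent/descent word after inserting a new maximum just before position `p`: the letter
`s (p - 1)` becomes the pair `true, false`. -/
def insertPeak (s : ℕ → Bool) (p i : ℕ) : Bool :=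
  if i + 1 < p then s i else if i + 1 = p then true else if i = p then false else s (i - 1)

/-- The increase of `changes` caused by `insertPeak s p`, for a word `s 0, …, s N` and a gap
`p ≤ N + 2`. -/
def peakGain (s : ℕ → Bool) (N p : ℕ) : ℕ :=
  if p = 0 then (if s 0 then 1 else 0)
  else if p = N + 2 then (if s N then 0 else 1)
  else if s (p - 1) then (if p = N + 1 then 1 else if s p then 2 else 0)
  else if p = 1 then 1 else if s (p - 2) then 0 else 2

lemma peakGain_le_two (s : ℕ → Bool) (N p : ℕ) : peakGain s N p ≤ 2 := by
  unfold peakGain; split_ifs <;> omega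

lemma peakGain_succ_of_le (s : ℕ → Bool) {N p : ℕ} (hp : p ≤ N) :
    peakGain s (N + 1) p = peakGain s N p := by
  simp only [peakGain, show p ≠ N + 1 + 2 by omega, show p ≠ N + 2 by omega,
    show p ≠ N + 1 by omega, if_false]

lemma insertPeak_of_lt (s : ℕ → Bool) {p i : ℕ} (hi : i + 1 < p) :
    insertPeak s p i = s i := by
  simp [insertPeak, hi]

lemma insertPeak_of_gt (s : ℕ → Bool) {p i : ℕ} (hi : p < i) :
    insertPeak s p i = s (i - 1) := by
  simp [insertPeak, show ¬ i + 1 < p by omega, show i + 1 ≠ p by omega, show i ≠ p by omega]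

lemma insertPeak_pred (s : ℕ → Bool) (i : ℕ) : insertPeak s (i + 1) i = true := by
  simp [insertPeak]

lemma insertPeak_self (s : ℕ → Bool) (i : ℕ) : insertPeak s i i = false := by
  simp [insertPeak]

lemma changes_insertPeak_last (s : ℕ → Bool) (N : ℕ) :
    changes (insertPeak s (N + 2)) (N + 1) = changes s N + peakGain s N (N + 2) := by
  rw [changes_succ, changes_congr (t := s) fun i hi => insertPeak_of_lt s (by omega),
    insertPeak_pred, insertPeak_of_lt s (by omega)]
  cases h : s N <;> simp [peakGain, h]

lemma peakGain_add_change (s : ℕ → Bool) {N p : ℕ} (hp : p ≤ N + 2) :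
    peakGain s N p + (if insertPeak s p (N + 1) ≠ insertPeak s p (N + 2) then 1 else 0)
      = (if s N ≠ s (N + 1) then 1 else 0) + peakGain s (N + 1) p := by
  rcases (show p ≤ N ∨ p = N + 1 ∨ p = N + 2 by omega) with hp | rfl | rfl
  · rw [peakGain_succ_of_le s hp, insertPeak_of_gt s (by omega),
      insertPeak_of_gt s (by omega)]
    simp only [show N + 2 - 1 = N + 1 by omega, Nat.add_sub_cancel]
    omega
  · rw [insertPeak_self, insertPeak_of_gt s (by omega)]
    simp only [peakGain, show N + 1 ≠ 0 by omega, show N + 1 ≠ N + 2 by omega,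
      show N + 1 ≠ N + 1 + 2 by omega, Nat.add_sub_cancel]
    cases s N <;> cases h : s (N + 1) <;> simp [h, add_comm]
  · rw [insertPeak_pred, insertPeak_self]
    simp only [peakGain, show N + 2 ≠ 0 by omega, show N + 2 ≠ N + 1 + 2 by omega,
      show N + 2 = N + 1 + 1 by omega, show N + 2 ≠ 1 by omega, Nat.add_sub_cancel]
    cases h : s N <;> cases s (N + 1) <;> simp [h]

lemma changes_insertPeak (s : ℕ → Bool) {N p : ℕ} (hp : p ≤ N + 2) :
    changes (insertPeak s p) (N + 1) = changes s N + peakGain s N p := by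
  induction N generalizing p with
  | zero =>
    rcases (show p ≤ 1 ∨ p = 2 by omega) with hp | rfl
    · interval_cases p <;> cases h : s 0 <;>
        simp [changes_succ, changes_zero, insertPeak, peakGain, h]
    · exact changes_insertPeak_last s 0
  | succ N ih =>
    rcases (show p ≤ N + 2 ∨ p = N + 3 by omega) with hp | rfl
    · rw [changes_succ, ih hp, changes_succ, add_assoc, peakGain_add_change s hp]
      ring
    · exact changes_insertPeak_last s (N + 1)

/-- Appending the letter `s (N + 1)` to the word only affects the gains of the last gaps, and as a
multiset these acquire the single new value `if s N = s (N + 1) then 2 else 0`. -/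
lemma peakGain_window (s : ℕ → Bool) (N d : ℕ) :
    ((if peakGain s (N + 1) (N + 1) = d then 1 else 0)
      + (if peakGain s (N + 1) (N + 2) = d then 1 else 0)
      + if peakGain s (N + 1) (N + 3) = d then 1 else 0)
    = ((if peakGain s N (N + 1) = d then 1 else 0) + (if peakGain s N (N + 2) = d then 1 else 0)
      + if (if s N = s (N + 1) then 2 else 0) = d then 1 else 0) := by
  simp only [peakGain, show N + 1 ≠ 0 by omega, show N + 2 ≠ 0 by omega,
    show N + 3 ≠ 0 by omega, show N + 1 ≠ N + 2 by omega, show N + 1 ≠ N + 1 + 2 by omega,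
    show N + 2 ≠ N + 1 + 2 by omega, show N + 3 = N + 1 + 2 by omega,
    show N + 2 = N + 1 + 1 by omega, show N + 1 + 1 ≠ 1 by omega, Nat.add_sub_cancel, if_true,
    if_false]
  cases h : s N <;> cases s (N + 1) <;> simp [h] <;> omega

lemma card_peakGain_succ (s : ℕ → Bool) (N d : ℕ) :
    #{p ∈ range (N + 1 + 3) | peakGain s (N + 1) p = d}
      = #{p ∈ range (N + 3) | peakGain s N p = d}
        + if (if s N = s (N + 1) then 2 else 0) = d then 1 else 0 := by
  have hwin := peakGain_window s N d
  have hpre : ∑ p ∈ range (N + 1), (if peakGain s (N + 1) p = d then 1 else 0)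
      = ∑ p ∈ range (N + 1), (if peakGain s N p = d then 1 else 0) :=
    sum_congr rfl fun p hp => by
      rw [peakGain_succ_of_le s (Nat.lt_succ_iff.mp (mem_range.mp hp))]
  rw [card_filter, card_filter, sum_range_add _ (N + 1) 3, show N + 3 = N + 1 + 2 from rfl,
    sum_range_add _ (N + 1) 2, hpre]
  simp only [sum_range_succ, sum_range_zero, zero_add, add_zero,
    show N + 1 + 1 = N + 2 from rfl, show N + 1 + 2 = N + 3 from rfl]
  omega

lemma card_peakGain_eq_zero (s : ℕ → Bool) (N : ℕ) :
    #{p ∈ range (N + 3) | peakGain s N p = 0} = changes s N + 1 := by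
  induction N with
  | zero =>
    cases h : s 0 <;> simp [peakGain, h, card_filter, sum_range_succ, changes_zero, -sum_boole]
  | succ N ih => rw [card_peakGain_succ, ih, changes_succ]; split_ifs <;> simp_all

lemma card_peakGain_eq_one (s : ℕ → Bool) (N : ℕ) :
    #{p ∈ range (N + 3) | peakGain s N p = 1} = 2 := by
  induction N with
  | zero => cases h : s 0 <;> simp [peakGain, h, card_filter, sum_range_succ, -sum_boole]
  | succ N ih => rw [card_peakGain_succ, ih]; split_ifs <;> simp_all

lemma card_peakGain_eq_two (s : ℕ → Bool) (N : ℕ) :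
    #{p ∈ range (N + 3) | peakGain s N p = 2} + changes s N = N := by
  induction N with
  | zero =>
    cases h : s 0 <;> simp [peakGain, h, card_filter, sum_range_succ, changes_zero, -sum_boole]
  | succ N ih => rw [card_peakGain_succ, changes_succ]; split_ifs <;> simp_all <;> omega

def insertAt (v : ℕ → ℕ) (p M i : ℕ) : ℕ :=
  if i < p then v i else if i = p then M else v (i - 1)

def ascents (v : ℕ → ℕ) (i : ℕ) : Bool :=
  decide (v i < v (i + 1))

lemma ascents_insertAt {v : ℕ → ℕ} {M : ℕ} (hv : ∀ i, v i < M) (p : ℕ) :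
    ascents (insertAt v p M) = insertPeak (ascents v) p := by
  funext i
  have := hv i
  rcases lt_trichotomy (i + 1) p with h | rfl | h
  · simp [ascents, insertAt, insertPeak, h, show i < p by omega]
  · simp [ascents, insertAt, insertPeak, this]
  · rcases (show i = p ∨ p < i by omega) with rfl | h'
    · simp [ascents, insertAt, insertPeak, (hv _).le]
    · simp [ascents, insertAt, insertPeak, show ¬ i < p by omega, show i ≠ p by omega,
        show ¬ i + 1 < p by omega, show i + 1 ≠ p by omega, show i + 1 - 1 = i - 1 + 1 by omega]

section Permutations

variable {m : ℕ}

lemma permVal_lt (hm : 0 < m) (σ : Equiv.Perm (Fin m)) (i : ℕ) : permVal σ i < m := by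
  unfold permVal
  split_ifs
  exacts [Fin.is_lt _, hm]

lemma permVal_ne_permVal_succ (σ : Equiv.Perm (Fin m)) {i : ℕ} (hi : i + 1 < m) :
    permVal σ i ≠ permVal σ (i + 1) := by
  simp only [permVal, dif_pos (show i < m by omega), dif_pos hi, ne_eq, Fin.val_inj,
    EmbeddingLike.apply_eq_iff_eq, Fin.mk.injEq]
  omega

lemma runs_eq_changes {n : ℕ} (hn : 2 ≤ n) (π : Equiv.Perm (Fin n)) :
    runs n π = changes (ascents (permVal π)) (n - 2) + 1 := by
  rw [runs, if_neg (by omega), changes, add_comm, card_filter, card_filter,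
    sum_Ico_eq_sum_range, show n - 1 - 1 = n - 2 by omega]
  refine congrArg (· + 1) (sum_congr rfl fun i hi => if_congr ?_ rfl rfl)
  have h₀ := permVal_ne_permVal_succ π (i := i) (by simp at hi; omega)
  have h₁ := permVal_ne_permVal_succ π (i := i + 1) (by simp at hi; omega)
  simp only [ascents, add_comm 1 i, Nat.add_sub_cancel, ne_eq, decide_eq_decide]
  omega

def insertMax (σ : Equiv.Perm (Fin m)) (p : Fin (m + 1)) : Equiv.Perm (Fin (m + 1)) :=
  (finSuccEquiv' p).trans (σ.optionCongr.trans (finSuccEquiv' (Fin.last m)).symm)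

lemma insertMax_apply_self (σ : Equiv.Perm (Fin m)) (p : Fin (m + 1)) :
    insertMax σ p p = Fin.last m := by
  simp [insertMax]

lemma insertMax_apply_succAbove (σ : Equiv.Perm (Fin m)) (p : Fin (m + 1)) (j : Fin m) :
    insertMax σ p (p.succAbove j) = (σ j).castSucc := by
  simp [insertMax]

lemma insertMax_symm_last (σ : Equiv.Perm (Fin m)) (p : Fin (m + 1)) :
    (insertMax σ p).symm (Fin.last m) = p := by
  rw [Equiv.symm_apply_eq, insertMax_apply_self]

lemma insertMax_injective :
    Function.Injective fun x : Equiv.Perm (Fin m) × Fin (m + 1) => insertMax x.1 x.2 := by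
  rintro ⟨σ, p⟩ ⟨σ', p'⟩ h
  obtain rfl : p = p' := by
    simpa only [insertMax_symm_last] using congrArg (fun τ => τ.symm (Fin.last m)) h
  have hσ : σ = σ' := Equiv.ext fun j => Fin.castSucc_injective m <| by
    simpa only [insertMax_apply_succAbove] using DFunLike.congr_fun h (p.succAbove j)
  rw [hσ]

lemma insertMax_bijective :
    Function.Bijective fun x : Equiv.Perm (Fin m) × Fin (m + 1) => insertMax x.1 x.2 := by
  rw [Fintype.bijective_iff_injective_and_card]
  refine ⟨insertMax_injective, ?_⟩
  simp [Fintype.card_perm, Nat.factorial_succ, mul_comm]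

lemma permVal_insertMax (σ : Equiv.Perm (Fin m)) (p : Fin (m + 1)) :
    permVal (insertMax σ p) = insertAt (permVal σ) p m := by
  funext j
  rcases lt_trichotomy j p with h | rfl | h
  · have hj : j < m := by omega
    have : (⟨j, by omega⟩ : Fin (m + 1)) = p.succAbove ⟨j, hj⟩ :=
      (Fin.succAbove_of_castSucc_lt p ⟨j, hj⟩ (Fin.lt_def.mpr h)).symm
    simp [permVal, insertAt, h, hj, show j < m + 1 by omega, this, insertMax_apply_succAbove]
  · simp [permVal, insertAt, insertMax_apply_self, p.isLt]
  · by_cases hj : j < m + 1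
    · have : (⟨j, hj⟩ : Fin (m + 1)) = p.succAbove ⟨j - 1, by omega⟩ := by
        rw [Fin.succAbove_of_le_castSucc _ _ (by simp [Fin.le_def]; omega)]
        ext; simp; omega
      simp [permVal, insertAt, show ¬ j < p by omega, show j ≠ p by omega, hj,
        show j - 1 < m by omega, this, insertMax_apply_succAbove]
    · simp [permVal, insertAt, show ¬ j < p by omega, show j ≠ p by omega, hj,
        show ¬ j - 1 < m by omega]

lemma runs_insertMax (hm : 2 ≤ m) (σ : Equiv.Perm (Fin m)) (p : Fin (m + 1)) :
    runs (m + 1) (insertMax σ p) = runs m σ + peakGain (ascents (permVal σ)) (m - 2) p := by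
  rw [runs_eq_changes (by omega), runs_eq_changes hm, permVal_insertMax,
    ascents_insertAt (permVal_lt (by omega) σ), show m + 1 - 2 = m - 2 + 1 by omega,
    changes_insertPeak _ (by omega)]
  ring

end Permutations

lemma card_filter_fin_val (n : ℕ) (P : ℕ → Prop) [DecidablePred P] :
    #{p : Fin n | P p} = #{p ∈ range n | P p} := by
  rw [← card_map Fin.valEmbedding]
  congr 1
  ext x
  simp only [mem_map, mem_filter, mem_univ, true_and, Fin.valEmbedding_apply, mem_range]
  exact ⟨fun ⟨p, hp, hpx⟩ => hpx ▸ ⟨p.isLt, hp⟩, fun h => ⟨⟨x, h.1⟩, h.2, rfl⟩⟩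

lemma card_filter_add_eq_of_le_two {ι : Type*} (S : Finset ι) {g : ι → ℕ} (hg : ∀ p, g p ≤ 2)
    (r : ℕ) (k : ℤ) :
    (#{p ∈ S | (r + g p : ℤ) = k} : ℤ)
      = (if (r : ℤ) = k then (#{p ∈ S | g p = 0} : ℤ) else 0)
        + (if (r : ℤ) = k - 1 then (#{p ∈ S | g p = 1} : ℤ) else 0)
        + (if (r : ℤ) = k - 2 then (#{p ∈ S | g p = 2} : ℤ) else 0) := by
  by_cases hk : r ≤ k ∧ k ≤ r + 2
  · obtain ⟨d, rfl⟩ : ∃ d : ℕ, k = r + d := ⟨(k - r).toNat, by omega⟩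
    rw [filter_congr fun p _ => show (r + g p : ℤ) = r + d ↔ g p = d by omega]
    obtain rfl | rfl | rfl : d = 0 ∨ d = 1 ∨ d = 2 := by omega
    all_goals split_ifs <;> omega
  · rw [filter_false_of_mem fun p _ => by have := hg p; omega]
    simp only [card_empty, Nat.cast_zero]
    split_ifs <;> omega

lemma runs_one (π : Equiv.Perm (Fin 1)) : runs 1 π = 0 := rfl

lemma card_insertMax_runs {m : ℕ} (hm : 1 ≤ m) (σ : Equiv.Perm (Fin m)) (k : ℤ) :
    (#{p | (runs (m + 1) (insertMax σ p) : ℤ) = k} : ℤ)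
      = (if (runs m σ : ℤ) = k then k else 0) + (if (runs m σ : ℤ) = k - 1 then 2 else 0)
        + (if (runs m σ : ℤ) = k - 2 then (m + 1 - k) else 0) := by
  obtain rfl | hm₂ := (show m = 1 ∨ 2 ≤ m by omega)
  · have h₂ : ∀ p, runs (1 + 1) (insertMax σ p) = 1 := fun _ => rfl
    simp only [h₂, runs_one, Nat.cast_one, Nat.cast_zero]
    by_cases hk : (1 : ℤ) = k
    · rw [filter_true_of_mem fun _ _ => hk, card_univ, Fintype.card_fin]
      split_ifs <;> omega
    · rw [filter_false_of_mem fun _ _ => hk, card_empty]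
      split_ifs <;> omega
  set s := ascents (permVal σ)
  have hr : runs m σ = changes s (m - 2) + 1 := runs_eq_changes hm₂ σ
  have h₀ := card_peakGain_eq_zero s (m - 2)
  have h₁ := card_peakGain_eq_one s (m - 2)
  have h₂ := card_peakGain_eq_two s (m - 2)
  simp only [runs_insertMax hm₂, Nat.cast_add]
  rw [card_filter_fin_val (m + 1) fun p => (runs m σ + peakGain s (m - 2) p : ℤ) = k,
    show m + 1 = m - 2 + 3 by omega, card_filter_add_eq_of_le_two _ (peakGain_le_two s _), h₀,
    h₁]
  split_ifs <;> omega

lemma Rk_eq_card (n : ℕ) (k : ℤ) :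
    Rk n k = #{π : Equiv.Perm (Fin n) | (runs n π : ℤ) = k} := by
  unfold Rk R
  split_ifs with hk
  · exact congrArg _ (congrArg card (filter_congr fun π _ => by omega))
  · rw [filter_false_of_mem fun π _ => by omega, card_empty, Nat.cast_zero]

lemma Rk_succ_eq_sum (m : ℕ) (k : ℤ) :
    Rk (m + 1) k
      = ∑ σ : Equiv.Perm (Fin m), (#{p | (runs (m + 1) (insertMax σ p) : ℤ) = k} : ℤ) := by
  rw [Rk_eq_card, card_filter, ← insertMax_bijective.sum_comp, Fintype.sum_prod_type]
  simp only [card_filter, Nat.cast_sum]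

lemma Rk_succ {m : ℕ} (hm : 1 ≤ m) (k : ℤ) :
    Rk (m + 1) k = k * Rk m k + 2 * Rk m (k - 1) + (m + 1 - k) * Rk m (k - 2) := by
  simp only [Rk_succ_eq_sum, card_insertMax_runs hm, sum_add_distrib, ← sum_filter, sum_const,
    nsmul_eq_mul, Rk_eq_card]
  ring

lemma R_one (k : ℕ) : R 1 k = if k = 0 then 1 else 0 := by
  simp only [R, runs_one]
  split_ifs with hk <;> simp [hk, Ne.symm]

/-- André's recurrence for the numbers of permutations by alternating runs. -/
theorem andre_recurrence :
    (∀ n : ℕ, 2 ≤ n → ∀ k : ℤ, 1 ≤ k →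
      Rk n k = k * Rk (n - 1) k + 2 * Rk (n - 1) (k - 1) + ((n : ℤ) - k) * Rk (n - 1) (k - 2))
    ∧ R 1 0 = 1 ∧ (∀ k : ℕ, 1 ≤ k → R 1 k = 0) := by
  refine ⟨fun n hn k _ => ?_, R_one 0, fun k hk => by rw [R_one, if_neg (by omega)]⟩
  obtain ⟨m, rfl⟩ : ∃ m, n = m + 1 := ⟨n - 1, by omega⟩
  rw [Rk_succ (by omega), Nat.add_sub_cancel]
  push_cast
  ring
end

section
/- For n ≥ 1 and 0 ≤ k ≤ ⌊(n+1)/2⌋, the coefficient p(n, n-2k+1) of the derivative polynomial P_n satisfies p(n,n-2k+1) = Σ_{i ≥ 1} i!·S(n,i)·2^{n-i}·(-1)^{i-n+k}·[C(i, n-2k) - C(i, n-2k+1)]. -/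
/-!
Over `ℂ` put `u = 1 + iX`. Then `1 + X² = u (2 - u)` and `d/dX = i d/du`, so the polynomials
`B_m = (1 - iX) uᵐ = (2 - u) uᵐ` satisfy `(1 + X²) B_m' = i (2m B_m - (m + 1) B_{m+1})`.
The operator `Q ↦ (1 + X²) Q'` therefore acts on coordinates in the basis `(B_m)` through the
recurrence `S(n+1, m) = m S(n, m) + S(n, m-1)`, and starting from `X + i = i B_0` (which has the
same derivative as `P_0 = X`) one gets `P_n = ∑ m! S(n,m) 2^(n-m) i^(n+1) (-1)^m B_m` for `n ≥ 1`.
The coefficients of `B_m` are differences of binomial coefficients, which gives the formula.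
-/

open Polynomial Finset

open Nat Complex

theorem stirling2_eq_stirlingSecond : ∀ n k : ℕ, stirling2 n k = stirlingSecond n k
  | 0, 0 | 0, _ + 1 | _ + 1, 0 => rfl
  | n + 1, k + 1 => by
    rw [stirling2, stirlingSecond_succ_succ, stirling2_eq_stirlingSecond n (k + 1),
      stirling2_eq_stirlingSecond n k]

theorem Finset.sum_range_succ_shift {M : Type*} [AddCommMonoid M] (f : ℕ → M) (n : ℕ)
    (h₀ : f 0 = 0) (hn : f (n + 1) = 0) :
    ∑ m ∈ range (n + 1), f (m + 1) = ∑ m ∈ range (n + 1), f m := by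
  rw [← add_zero (∑ m ∈ range (n + 1), f (m + 1)), ← h₀, ← sum_range_succ', sum_range_succ, hn,
    add_zero]

section TanBasis

variable {R : Type*} [CommRing R]

noncomputable def tanBasis (a : R) (m : ℕ) : R[X] :=
  (1 - C a * X) * (1 + C a * X) ^ m

theorem coeff_one_add_C_mul_X_pow (a : R) (m j : ℕ) :
    ((1 + C a * X) ^ m).coeff j = a ^ j * m.choose j := by
  induction m generalizing j with
  | zero => cases j <;> simp [coeff_one]
  | succ m ih =>
    rw [pow_succ, mul_add, mul_one, mul_left_comm, coeff_add, coeff_C_mul]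
    cases j with
    | zero => simp [ih]
    | succ j =>
      rw [coeff_mul_X, ih, ih, choose_succ_succ]
      push_cast
      ring

theorem coeff_tanBasis (a : R) (m j : ℕ) :
    (tanBasis a m).coeff j =
      a ^ j * (m.choose j - if j = 0 then 0 else (m.choose (j - 1) : R)) := by
  rw [tanBasis, sub_mul, one_mul, mul_assoc, coeff_sub, coeff_C_mul, coeff_one_add_C_mul_X_pow]
  cases j with
  | zero => simp
  | succ j =>
    rw [coeff_X_mul, coeff_one_add_C_mul_X_pow, if_neg j.succ_ne_zero, Nat.add_sub_cancel]
    ring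

theorem one_add_X_sq_mul_derivative_tanBasis {a : R} (ha : a ^ 2 = -1) (m : ℕ) :
    (1 + X ^ 2) * derivative (tanBasis a m) =
      C a * (2 * (m : R[X]) * tanBasis a m - ((m : R[X]) + 1) * tanBasis a (m + 1)) := by
  have hsq : (1 + X ^ 2 : R[X]) = (1 - C a * X) * (1 + C a * X) := by
    have hC : C a ^ 2 = -1 := by rw [← C_pow, ha, C_neg, C_1]
    linear_combination (X ^ 2 : R[X]) * hC
  have hpow : (1 + X ^ 2) * derivative ((1 + C a * X) ^ m) =
      (m : R[X]) * C a * (1 - C a * X) * (1 + C a * X) ^ m := by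
    cases m with
    | zero => simp
    | succ m =>
      rw [derivative_pow_succ, hsq]
      simp only [map_add, map_natCast, map_one, derivative_one, derivative_mul,
        derivative_C, zero_mul, derivative_X, mul_one, zero_add, cast_add, cast_one]
      ring
  rw [tanBasis, derivative_mul, mul_add, mul_left_comm _ (1 - C a * X), hpow, tanBasis, hsq]
  simp only [derivative_sub, derivative_one, derivative_mul, derivative_C, zero_mul, derivative_X,
    mul_one, zero_add, zero_sub, neg_mul, mul_neg]
  ring

end TanBasis

-- `(-2)⁻¹ ^ m * 2 ^ n` stands for `(-1) ^ m * 2 ^ (n - m)`, avoiding truncated subtraction.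
noncomputable def tanCoeff (n m : ℕ) : ℂ :=
  I ^ (n + 1) * (m ! * stirling2 n m) * (-2)⁻¹ ^ m * 2 ^ n

theorem tanCoeff_of_lt {n m : ℕ} (h : n < m) : tanCoeff n m = 0 := by
  simp [tanCoeff, stirling2_eq_stirlingSecond, stirlingSecond_eq_zero_of_lt h]

theorem tanCoeff_zero_right {n : ℕ} (hn : n ≠ 0) : tanCoeff n 0 = 0 := by
  obtain ⟨n, rfl⟩ := exists_eq_succ_of_ne_zero hn
  simp [tanCoeff, stirling2]

theorem tanCoeff_succ_succ (n m : ℕ) :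
    tanCoeff (n + 1) (m + 1) =
      I * (2 * (m + 1)) * tanCoeff n (m + 1) - I * (m + 1) * tanCoeff n m := by
  have hw : (-2 : ℂ) * (-2)⁻¹ = 1 := by norm_num
  simp only [tanCoeff, stirling2, factorial_succ]
  push_cast
  linear_combination (-I ^ (n + 1) * I * (m + 1) * m ! * stirling2 n m * (-2)⁻¹ ^ m * 2 ^ n) * hw

noncomputable def tanExpansion (n : ℕ) : ℂ[X] :=
  ∑ m ∈ range (n + 1), C (tanCoeff n m) * tanBasis I m

theorem tanExpansion_zero : tanExpansion 0 = X + C I := by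
  have hI : C I * C I = (-1 : ℂ[X]) := by rw [← C_mul, I_mul_I, C_neg, C_1]
  simp only [tanExpansion, zero_add, sum_range_one, tanCoeff, tanBasis, stirling2, factorial_zero,
    pow_zero, pow_one, cast_one, mul_one]
  linear_combination (-X) * hI

theorem tanExpansion_succ (n : ℕ) :
    tanExpansion (n + 1) = (1 + X ^ 2) * derivative (tanExpansion n) := by
  set f : ℕ → ℂ[X] := fun m => C (I * (2 * m) * tanCoeff n m) * tanBasis I m
  set g : ℕ → ℂ[X] := fun m => C (I * (m + 1) * tanCoeff n m) * tanBasis I (m + 1)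
  have hf : ∑ m ∈ range (n + 1), f (m + 1) = ∑ m ∈ range (n + 1), f m :=
    sum_range_succ_shift f n (by simp [f]) (by simp [f, tanCoeff_of_lt])
  calc tanExpansion (n + 1)
      = ∑ m ∈ range (n + 1), (f (m + 1) - g m) := by
        rw [tanExpansion, sum_range_succ', tanCoeff_zero_right n.succ_ne_zero, map_zero,
          zero_mul, add_zero]
        refine sum_congr rfl fun m _ => ?_
        simp only [f, g, tanCoeff_succ_succ, map_sub, sub_mul]
        push_cast
        ring_nf
    _ = ∑ m ∈ range (n + 1), (f m - g m) := by rw [sum_sub_distrib, hf, sum_sub_distrib]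
    _ = (1 + X ^ 2) * derivative (tanExpansion n) := by
        rw [tanExpansion, derivative_sum, mul_sum]
        refine sum_congr rfl fun m _ => ?_
        rw [derivative_C_mul, mul_left_comm,
          one_add_X_sq_mul_derivative_tanBasis (by rw [I_sq]) m]
        simp only [f, g, map_mul, map_add, map_natCast, map_ofNat, map_one]
        ring

theorem map_P_succ (n : ℕ) :
    (P (n + 1)).map (algebraMap ℝ ℂ) = (1 + X ^ 2) * derivative ((P n).map (algebraMap ℝ ℂ)) := by
  simp [P, derivative_map]

theorem derivative_map_P (n : ℕ) :
    derivative ((P n).map (algebraMap ℝ ℂ)) = derivative (tanExpansion n) := by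
  induction n with
  | zero => simp [P, tanExpansion_zero]
  | succ n ih => rw [map_P_succ, ih, ← tanExpansion_succ]

theorem map_P_eq_tanExpansion {n : ℕ} (hn : 1 ≤ n) :
    (P n).map (algebraMap ℝ ℂ) = tanExpansion n := by
  obtain ⟨n, rfl⟩ := exists_add_of_le hn
  rw [add_comm, map_P_succ, derivative_map_P, tanExpansion_succ]

theorem tanCoeff_mul_coeff_tanBasis {n k m : ℕ} (hk : 2 * k ≤ n + 1) (hm : m ≤ n) :
    tanCoeff n m * (tanBasis I m).coeff (n + 1 - 2 * k) =
      (m ! * stirling2 n m * 2 ^ (n - m) : ℂ) * (-1) ^ ((m : ℤ) - n + k) *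
        ((if 2 * k ≤ n then (m.choose (n - 2 * k) : ℂ) else 0) - m.choose (n + 1 - 2 * k)) := by
  have hprev : (if n + 1 - 2 * k = 0 then 0 else (m.choose (n + 1 - 2 * k - 1) : ℂ)) =
      if 2 * k ≤ n then (m.choose (n - 2 * k) : ℂ) else 0 := by
    by_cases h : 2 * k ≤ n
    · rw [if_neg (by omega), if_pos h, show n + 1 - 2 * k - 1 = n - 2 * k by omega]
    · rw [if_pos (by omega), if_neg h]
  have hI : I ^ (n + 1) * I ^ (n + 1 - 2 * k) = (-1) ^ (n + 1 - k) := by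
    rw [← pow_add, show n + 1 + (n + 1 - 2 * k) = 2 * (n + 1 - k) by omega, pow_mul, I_sq]
  have h2 : (-2 : ℂ)⁻¹ ^ m * 2 ^ n = (-1) ^ m * 2 ^ (n - m) := by
    rw [← Nat.add_sub_cancel' hm, pow_add, Nat.add_sub_cancel_left, ← mul_assoc, ← mul_pow]
    norm_num
  have hsign : (-1 : ℂ) ^ m * (-1) ^ (n + 1 - k) = -(-1) ^ ((m : ℤ) - n + k) := by
    have hexp : ((m + (n + 1 - k) : ℕ) : ℤ) = ((m : ℤ) - n + k) + (2 * ((n : ℤ) - k) + 1) := by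
      omega
    rw [← pow_add, ← zpow_natCast, hexp, zpow_add₀ (by norm_num),
      Odd.neg_one_zpow ⟨(n : ℤ) - k, rfl⟩, mul_neg_one]
  have hfactor : I ^ (n + 1) * I ^ (n + 1 - 2 * k) * ((-2 : ℂ)⁻¹ ^ m * 2 ^ n) =
      -((-1) ^ ((m : ℤ) - n + k) * 2 ^ (n - m)) := by
    rw [hI, h2]
    linear_combination (2 : ℂ) ^ (n - m) * hsign
  rw [tanCoeff, coeff_tanBasis, hprev]
  linear_combination (m ! * stirling2 n m * ((m.choose (n + 1 - 2 * k) : ℂ) -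
    if 2 * k ≤ n then (m.choose (n - 2 * k) : ℂ) else 0)) * hfactor

/-- Explicit formula for `p(n, n-2k+1)` in terms of Stirling numbers of the second kind.
(The sum over `i ≥ 1` is written over `1 ≤ i ≤ n`, all further terms vanishing since
`S(n,i) = 0` for `i > n`; the binomial `C(i, n-2k)` is `0` when `n - 2k < 0`.) -/
theorem p_explicit (n : ℕ) (hn : 1 ≤ n) (k : ℕ) (hk : k ≤ (n + 1) / 2) :
    (P n).coeff (n + 1 - 2 * k) =
      ∑ i ∈ Finset.Icc 1 n,
        ((i.factorial * stirling2 n i * 2 ^ (n - i) : ℕ) : ℝ) *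
          (-1 : ℝ) ^ ((i : ℤ) - (n : ℤ) + (k : ℤ)) *
          ((if 2 * k ≤ n then ((i.choose (n - 2 * k) : ℕ) : ℝ) else 0) -
            ((i.choose (n + 1 - 2 * k) : ℕ) : ℝ)) := by
  have hk₂ : 2 * k ≤ n + 1 := by omega
  have hcoeff := congrArg (coeff · (n + 1 - 2 * k)) (map_P_eq_tanExpansion hn)
  simp only [coeff_map, Complex.coe_algebraMap, tanExpansion, finsetSum_coeff, coeff_C_mul]
    at hcoeff
  rw [range_eq_Ico, sum_eq_sum_Ico_succ_bot (by omega), Ico_add_one_right_eq_Icc,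
    tanCoeff_zero_right (by omega), zero_mul, zero_add] at hcoeff
  apply Complex.ofReal_injective
  rw [hcoeff]
  push_cast [apply_ite Complex.ofReal]
  exact sum_congr rfl fun m hm => tanCoeff_mul_coeff_tanBasis hk₂ (mem_Icc.1 hm).2
end
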